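/- In the external-synchronization setting: let s ∈ ℕ, s ≥ 1, be such that every directed cycle of H has nonnegative ω^{s−1/2}-weight, let v ∈ V', and let t < t' be times with Ψ_{v₀}^{s−1/2}(t) = 0. Then L_v(t') − L_v(t) ≥ (t'−t) + min{ Ψ_v^{s−1/2}(t), μ·(t'−t) − Ψ^{s−1/2}(t) + Ψ_v^{s−1/2}(t) }. -/

import Mathlib

/-
Let `Ψ_u = Ψ_u^{s-1/2}(t)`, give every node the target `M_u = L_u(t) + Ψ_u`, and measure its lag
`M_u + (1+μ)(τ-t) - L_u(τ)`, which equals `Ψ_u ≤ Ψ^{s-1/2}(t)` at time `t`. As cycles are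
`ω^{s-1/2}`-nonnegative, `Ψ_u` is attained on a path, so `M_u ≤ M_w + ω(w,u)` along every edge
and, if `Ψ_u > 0`, `M_u + ω(u,w) ≤ M_w` along some edge. While `μ(τ-t) < Ψ^{s-1/2}(t)`, a node
whose lag is maximal and has reached `Ψ^{s-1/2}(t)` must have `Ψ_u > 0` (clocks run at rate at
least 1), so it is not `v₀`, it satisfies the fast condition on level `s-1`, and its lag does not
grow. Hence all lags stay below `Ψ^{s-1/2}(t)` up to time `min{t', t + Ψ^{s-1/2}(t)/μ}`, which
gives the bound.
-/

open SimpleGraph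

namespace GCS

variable {V : Type*}

def edgeWt (δ O : V → V → ℝ) (s : ℝ) (v w : V) : ℝ :=
  4 * s * δ v w - O v w

def walkWt {G : SimpleGraph V} (δ O : V → V → ℝ) (s : ℝ) {v w : V}
    (p : G.Walk v w) : ℝ :=
  (p.darts.map fun d => edgeWt δ O s d.toProd.1 d.toProd.2).sum

def NonnegCycles (G : SimpleGraph V) (δ O : V → V → ℝ) (s : ℝ) : Prop :=
  ∀ (v : V) (c : G.Walk v v), c.IsCycle → 0 ≤ walkWt δ O s c

noncomputable def dS (G : SimpleGraph V) (δ O : V → V → ℝ) (s : ℝ) (v w : V) : ℝ :=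
  sInf {x : ℝ | ∃ p : G.Walk v w, walkWt δ O s p = x}

noncomputable def Psi (G : SimpleGraph V) (δ O : V → V → ℝ) (s : ℝ)
    (L : V → ℝ → ℝ) (v : V) (t : ℝ) : ℝ :=
  sSup {x : ℝ | ∃ w : V, ∃ p : G.Walk v w, x = L w t - L v t - walkWt δ O s p}

noncomputable def PsiAll (G : SimpleGraph V) (δ O : V → V → ℝ) (s : ℝ)
    (L : V → ℝ → ℝ) (t : ℝ) : ℝ :=
  ⨆ v : V, Psi G δ O s L v t

noncomputable def PsiE (G : SimpleGraph V) (δ O : V → V → ℝ) (s : ℝ)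
    (L : V → ℝ → ℝ) (v : V) (t : ℝ) : EReal :=
  ⨆ w : V, ⨆ p : G.Walk v w, ((L w t - L v t - walkWt δ O s p : ℝ) : EReal)

def SlowCondAt (G : SimpleGraph V) (δ O : V → V → ℝ) (L : V → ℝ → ℝ)
    (v : V) (t : ℝ) (s : ℕ) : Prop :=
  (∃ w, G.Adj v w ∧ 4 * (s : ℝ) * δ v w ≤ L v t - L w t - O v w) ∧
  (∀ w, G.Adj v w → -(4 * (s : ℝ) * δ v w) ≤ L v t - L w t - O v w)

def FastCondAt (G : SimpleGraph V) (δ O : V → V → ℝ) (L : V → ℝ → ℝ)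
    (v : V) (t : ℝ) (s : ℕ) : Prop :=
  (∃ w, G.Adj v w ∧ L v t - L w t - O v w ≤ -((4 * (s : ℝ) + 2) * δ v w)) ∧
  (∀ w, G.Adj v w → L v t - L w t - O v w ≤ (4 * (s : ℝ) + 2) * δ v w)

def Admissible (G : SimpleGraph V) (δ O : V → V → ℝ) (L : V → ℝ → ℝ)
    (ϑ μ : ℝ) : Prop :=
  ∀ (v : V) (t : ℝ),
    ((∃ s : ℕ, SlowCondAt G δ O L v t s) → deriv (L v) t ≤ ϑ) ∧
    ((∃ s : ℕ, FastCondAt G δ O L v t s) → 1 + μ ≤ deriv (L v) t)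

def AdmissibleOn (G : SimpleGraph V) (δ O : V → V → ℝ) (L : V → ℝ → ℝ)
    (ϑ μ : ℝ) (a b : ℝ) : Prop :=
  ∀ (v : V), ∀ t ∈ Set.Icc a b,
    ((∃ s : ℕ, SlowCondAt G δ O L v t s) → deriv (L v) t ≤ ϑ) ∧
    ((∃ s : ℕ, FastCondAt G δ O L v t s) → 1 + μ ≤ deriv (L v) t)

end GCS

namespace GCS

open Finset Filter Topology Set

section Walks

variable {V : Type*} {G : SimpleGraph V} {δ O : V → V → ℝ} {σ : ℝ}

@[simp]
lemma walkWt_nil (u : V) : walkWt δ O σ (Walk.nil : G.Walk u u) = 0 := by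
  simp [walkWt]

@[simp]
lemma walkWt_cons {u v w : V} (h : G.Adj u v) (p : G.Walk v w) :
    walkWt δ O σ (Walk.cons h p) = edgeWt δ O σ u v + walkWt δ O σ p := by
  simp [walkWt]

lemma walkWt_append {u v w : V} (p : G.Walk u v) (q : G.Walk v w) :
    walkWt δ O σ (p.append q) = walkWt δ O σ p + walkWt δ O σ q := by
  simp [walkWt]

/-- Nonnegativity of the closed walks `u v u`, which `Walk.IsCycle`, and hence `NonnegCycles`,
excludes. -/
def NonnegTwoCycles (G : SimpleGraph V) (δ O : V → V → ℝ) (σ : ℝ) : Prop :=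
  ∀ a b, G.Adj a b → 0 ≤ edgeWt δ O σ a b + edgeWt δ O σ b a

lemma nonnegTwoCycles_of_pos (hσ : 0 ≤ σ) (hδpos : ∀ v w, G.Adj v w → 0 < δ v w)
    (hOanti : ∀ v w, G.Adj v w → O v w = -O w v) : NonnegTwoCycles G δ O σ := by
  intro a b h
  have := add_pos (hδpos a b h) (hδpos b a h.symm)
  unfold edgeWt
  rw [hOanti a b h]
  nlinarith

lemma walkWt_cons_nonneg_of_isPath (hnc : NonnegCycles G δ O σ)
    (hpair : NonnegTwoCycles G δ O σ)
    {u v : V} (h : G.Adj u v) {q : G.Walk v u} (hq : q.IsPath) :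
    0 ≤ walkWt δ O σ (Walk.cons h q) := by
  by_cases he : s(u, v) ∈ q.edges
  · -- a path from `v` to `u` through the edge `uv` is that edge alone
    cases q with
    | nil => exact absurd rfl h.ne
    | @cons _ y _ h' rest =>
      have hrest := (Walk.cons_isPath_iff h' rest).1 hq
      rw [Walk.edges_cons, List.mem_cons] at he
      rcases he with he | he
      · obtain rfl : u = y := by
          rcases Sym2.eq_iff.1 he with ⟨huv, -⟩ | ⟨huy, -⟩
          · exact absurd huv h.ne
          · exact huy
        obtain rfl := (Walk.isPath_iff_nil.1 hrest.1).eq_nil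
        simpa using hpair _ _ h
      · exact absurd (rest.snd_mem_support_of_mem_edges he) hrest.2
  · exact hnc u _ ((Walk.cons_isCycle_iff q h).2 ⟨hq, he⟩)

lemma walkWt_bypass_le [DecidableEq V] (hnc : NonnegCycles G δ O σ)
    (hpair : NonnegTwoCycles G δ O σ)
    {u w : V} (p : G.Walk u w) : walkWt δ O σ p.bypass ≤ walkWt δ O σ p := by
  induction p with
  | nil => simp [Walk.bypass]
  | @cons u v w h p ih =>
    simp only [Walk.bypass, walkWt_cons]
    split_ifs with hu
    · have hsplit := walkWt_append (δ := δ) (O := O) (σ := σ)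
        (p.bypass.takeUntil u hu) (p.bypass.dropUntil u hu)
      rw [Walk.take_spec] at hsplit
      have hloop := walkWt_cons_nonneg_of_isPath hnc hpair h
        (p.bypass_isPath.takeUntil hu)
      rw [walkWt_cons] at hloop
      linarith
    · simpa using ih

end Walks

section Potential

variable {V : Type*} [Finite V] {G : SimpleGraph V} {δ O : V → V → ℝ} {σ : ℝ}

/-- Every walk is at least as heavy as its bypass, so the supremum defining `Psi` is a maximum
over the finitely many paths. -/
lemma isGreatest_Psi (hnc : NonnegCycles G δ O σ)
    (hpair : NonnegTwoCycles G δ O σ)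
    (L : V → ℝ → ℝ) (u : V) (t : ℝ) :
    IsGreatest {x | ∃ w, ∃ p : G.Walk u w, x = L w t - L u t - walkWt δ O σ p}
      (Psi G δ O σ L u t) := by
  classical
  have : Fintype V := Fintype.ofFinite V
  have : Nonempty (Σ w, G.Path u w) := ⟨⟨u, Path.nil⟩⟩
  obtain ⟨⟨w, p⟩, hp⟩ :=
    Finite.exists_max fun q : Σ w, G.Path u w => L q.1 t - L u t - walkWt δ O σ q.2.1
  have hgreatest : IsGreatest {x | ∃ w, ∃ p : G.Walk u w, x = L w t - L u t - walkWt δ O σ p}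
      (L w t - L u t - walkWt δ O σ p.1) := by
    refine ⟨⟨w, p.1, rfl⟩, ?_⟩
    rintro _ ⟨w', q, rfl⟩
    have := hp ⟨w', q.bypass, q.bypass_isPath⟩
    linarith [walkWt_bypass_le hnc hpair q]
  rw [Psi, hgreatest.csSup_eq]
  exact hgreatest

lemma Psi_nonneg (hnc : NonnegCycles G δ O σ) (hpair : NonnegTwoCycles G δ O σ)
    (L : V → ℝ → ℝ) (u : V) (t : ℝ) : 0 ≤ Psi G δ O σ L u t :=
  (isGreatest_Psi hnc hpair L u t).2 ⟨u, Walk.nil, by simp⟩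

lemma add_Psi_le_add_Psi_add_edgeWt (hnc : NonnegCycles G δ O σ)
    (hpair : NonnegTwoCycles G δ O σ) (L : V → ℝ → ℝ) (t : ℝ) {u w : V} (h : G.Adj w u) :
    L u t + Psi G δ O σ L u t ≤ L w t + Psi G δ O σ L w t + edgeWt δ O σ w u := by
  obtain ⟨⟨x, p, hp⟩, -⟩ := isGreatest_Psi hnc hpair L u t
  have := (isGreatest_Psi hnc hpair L w t).2 ⟨x, Walk.cons h p, rfl⟩
  rw [walkWt_cons] at this
  linarith

lemma exists_adj_add_Psi_add_edgeWt_le (hnc : NonnegCycles G δ O σ)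
    (hpair : NonnegTwoCycles G δ O σ) (L : V → ℝ → ℝ) (t : ℝ) {u : V} (hu : 0 < Psi G δ O σ L u t) :
    ∃ w, G.Adj u w ∧ L u t + Psi G δ O σ L u t + edgeWt δ O σ u w ≤ L w t + Psi G δ O σ L w t := by
  obtain ⟨⟨x, p, hp⟩, -⟩ := isGreatest_Psi hnc hpair L u t
  cases p with
  | nil => simp at hp; linarith
  | @cons _ w _ h q =>
    have := (isGreatest_Psi hnc hpair L w t).2 ⟨x, q, rfl⟩
    rw [walkWt_cons] at hp
    exact ⟨w, h, by linarith⟩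

end Potential

lemma Psi_le_PsiAll {V : Type*} [Finite V] (G : SimpleGraph V) (δ O : V → V → ℝ) (σ : ℝ)
    (L : V → ℝ → ℝ) (u : V) (t : ℝ) : Psi G δ O σ L u t ≤ PsiAll G δ O σ L t :=
  le_ciSup (f := fun u => Psi G δ O σ L u t) (Set.finite_range _).bddAbove u

/-- The thresholds `(4 n + 2) δ` of the fast condition on level `n` are the `δ`-parts of the edge
weights on level `n + 1/2`. -/
lemma fastCondAt_of_forall_sub_le {V : Type*} {G : SimpleGraph V} {δ O : V → V → ℝ}
    (hδsym : ∀ v w, G.Adj v w → δ v w = δ w v) (hOanti : ∀ v w, G.Adj v w → O v w = -O w v)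
    {L : V → ℝ → ℝ} (M : V → ℝ) {u : V} {x : ℝ} {n : ℕ}
    (hin : ∀ w, G.Adj w u → M u ≤ M w + edgeWt δ O (n + 1/2) w u)
    (hout : ∃ w, G.Adj u w ∧ M u + edgeWt δ O (n + 1/2) u w ≤ M w)
    (hmax : ∀ w, M w - L w x ≤ M u - L u x) :
    FastCondAt G δ O L u x n := by
  obtain ⟨w, hw, hMw⟩ := hout
  refine ⟨⟨w, hw, ?_⟩, fun w hw => ?_⟩
  · have := hmax w
    unfold edgeWt at hMw
    linarith
  · have := hmax w
    have hMw := hin w hw.symm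
    unfold edgeWt at hMw
    rw [← hδsym u w hw, hOanti w u hw.symm] at hMw
    linarith

lemma eventually_slope_sup'_lt {ι : Type*} [Fintype ι] [Nonempty ι] {f : ι → ℝ → ℝ} {x r : ℝ}
    (hf : ∀ i, DifferentiableAt ℝ (f i) x)
    (hmax : ∀ i, (∀ j, f j x ≤ f i x) → deriv (f i) x < r) :
    ∀ᶠ z in 𝓝[>] x, slope (fun y => univ.sup' univ_nonempty (f · y)) x z < r := by
  set F : ℝ → ℝ := fun y => univ.sup' univ_nonempty (f · y)
  have hslope : ∀ᶠ z in 𝓝[>] x, ∀ i, f i x = F x → slope (f i) x z < r := by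
    refine eventually_all.2 fun i => ?_
    by_cases hi : f i x = F x
    · have hlt := hmax i fun j => hi ▸ le_sup' (f · x) (mem_univ j)
      exact (((hf i).hasDerivAt.tendsto_slope.eventually_lt_const hlt).filter_mono
        (nhdsWithin_mono x fun _ => ne_of_gt)).mono fun _ h _ => h
    · exact Eventually.of_forall fun _ h => absurd h hi
  have hstrict : ∀ᶠ z in 𝓝[>] x, ∀ i, f i x < F x → f i z < F z := by
    refine eventually_all.2 fun i => ?_
    by_cases hi : f i x < F x
    · have hF : ContinuousAt F x :=
        ContinuousAt.finset_sup'_apply _ fun j _ => (hf j).continuousAt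
      exact (((hf i).continuousAt.eventually_lt hF hi).filter_mono nhdsWithin_le_nhds).mono
        fun _ h _ => h
    · exact Eventually.of_forall fun _ h => absurd h hi
  filter_upwards [hslope, hstrict] with z hz hz'
  obtain ⟨i, -, hi⟩ := exists_mem_eq_sup' univ_nonempty (f · z)
  have hix : f i x = F x := (le_sup' (f · x) (mem_univ i)).antisymm <|
    not_lt.1 fun h => (hz' i h).ne hi.symm
  have : slope F x z = slope (f i) x z := by
    simp only [slope_def_field, F, ← hix, hi]
  exact this ▸ hz i hix

lemma le_of_deriv_nonpos_of_isMax {ι : Type*} [Fintype ι] {f : ι → ℝ → ℝ} {a b K : ℝ}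
    (hf : ∀ i, Differentiable ℝ (f i)) (ha : ∀ i, f i a ≤ K)
    (hmax : ∀ x ∈ Ico a b, ∀ i, (∀ j, f j x ≤ f i x) → K ≤ f i x → deriv (f i) x ≤ 0) :
    ∀ x ∈ Icc a b, ∀ i, f i x ≤ K := by
  -- add the constant `K` to the family, so that the maximum is always at least `K`
  set g : Option ι → ℝ → ℝ := fun o => o.elim (fun _ => K) f
  have hg : ∀ o, Differentiable ℝ (g o) := by
    rintro (_ | i)
    exacts [differentiable_const K, hf i]
  intro x hx i
  refine (le_sup' (g · x) (mem_univ (some i))).trans ?_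
  refine image_le_of_liminf_slope_right_le_deriv_boundary (B := fun _ => K) (B' := 0)
    (Continuous.finset_sup'_apply _ fun o _ => (hg o).continuous).continuousOn
    (sup'_le _ _ fun o _ => ?_) continuousOn_const (fun _ _ => hasDerivWithinAt_const _ _ _)
    (fun y hy r hr => (eventually_slope_sup'_lt (fun o => (hg o).differentiableAt)
      fun o ho => ?_).frequently) hx
  · cases o
    exacts [le_rfl, ha _]
  · cases o with
    | none => simpa [g] using hr
    | some j =>
      have := hmax y hy j (fun k => ho (some k)) (ho none)
      exact this.trans_lt hr

lemma add_min_le_sub_of_lag_le {ℓ : ℝ → ℝ} {μ t t' P B : ℝ} (hμ : 0 < μ)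
    (hℓ : ∀ x y, x ≤ y → y - x ≤ ℓ y - ℓ x)
    (hlag : ℓ t + P + (1 + μ) * (min t' (t + B / μ) - t) - ℓ (min t' (t + B / μ)) ≤ B) :
    (t' - t) + min P (μ * (t' - t) - B + P) ≤ ℓ t' - ℓ t := by
  rcases le_total t' (t + B / μ) with ht' | ht'
  · rw [min_eq_left ht'] at hlag
    linarith [min_le_right P (μ * (t' - t) - B + P)]
  · rw [min_eq_right ht'] at hlag
    have hB : μ * (t + B / μ - t) = B := by field_simp; ring
    linarith [min_le_left P (μ * (t' - t) - B + P), hℓ _ _ ht']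

end GCS

theorem virtual_catchup_general
    {V' : Type*} [Fintype V']
    (v₀ : V') (H : SimpleGraph V')
    (δ O : V' → V' → ℝ)
    (hδpos : ∀ v w, H.Adj v w → 0 < δ v w)
    (hδsym : ∀ v w, H.Adj v w → δ v w = δ w v)
    (hOanti : ∀ v w, H.Adj v w → O v w = -O w v)
    (L : V' → ℝ → ℝ) (ϑ μ ζ : ℝ)
    (hϑ : 1 < ϑ) (hμ : 0 < μ) (hζϑ : ϑ < ζ)
    (hdiff : ∀ v, Differentiable ℝ (L v))
    (hv₀ : ∀ t : ℝ, deriv (L v₀) t = ζ)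
    (hlo : ∀ v : V', v ≠ v₀ → ∀ t : ℝ, 1 ≤ deriv (L v) t)
    (hfast : ∀ v : V', v ≠ v₀ → ∀ t : ℝ,
      (∃ s : ℕ, GCS.FastCondAt H δ O L v t s) → 1 + μ ≤ deriv (L v) t)
    (s : ℕ) (hs1 : 1 ≤ s) (hnc : GCS.NonnegCycles H δ O ((s : ℝ) - 1/2))
    (v : V') (t t' : ℝ) (htt' : t < t')
    (hzero : GCS.Psi H δ O ((s : ℝ) - 1/2) L v₀ t = 0) :
    (t' - t) + min (GCS.Psi H δ O ((s : ℝ) - 1/2) L v t)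
        (μ * (t' - t) - GCS.PsiAll H δ O ((s : ℝ) - 1/2) L t
          + GCS.Psi H δ O ((s : ℝ) - 1/2) L v t) ≤
      L v t' - L v t := by
  obtain ⟨n, rfl⟩ : ∃ n, s = n + 1 := ⟨s - 1, by omega⟩
  have hσ : ((n + 1 : ℕ) : ℝ) - 1/2 = n + 1/2 := by push_cast; ring
  rw [hσ] at hnc hzero ⊢
  have hpair := GCS.nonnegTwoCycles_of_pos (σ := n + 1/2) (by positivity) hδpos hOanti
  have hrate : ∀ u x y, x ≤ y → y - x ≤ L u y - L u x := by
    intro u x y hxy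
    refine (one_mul (y - x)).symm.trans_le (mul_sub_le_image_sub_of_le_deriv (hdiff u) ?_ hxy)
    intro z
    by_cases hu : u = v₀
    · rw [hu, hv₀]; linarith
    · exact hlo u hu z
  set Ψ : V' → ℝ := fun u => GCS.Psi H δ O (n + 1/2) L u t
  set B := GCS.PsiAll H δ O (n + 1/2) L t
  have hB : 0 ≤ B := (GCS.Psi_nonneg hnc hpair L v t).trans (GCS.Psi_le_PsiAll H δ O _ L v t)
  set lag : V' → ℝ → ℝ := fun u τ => L u t + Ψ u + (1 + μ) * (τ - t) - L u τ
  refine GCS.add_min_le_sub_of_lag_le hμ (hrate v) <| GCS.le_of_deriv_nonpos_of_isMax (f := lag)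
    (fun u => by fun_prop) (fun u => by simpa [lag] using GCS.Psi_le_PsiAll H δ O _ L u t)
    (fun x hx u hu hBu => ?_) _
    ⟨le_min htt'.le (le_add_of_nonneg_right (div_nonneg hB hμ.le)), le_rfl⟩ v
  -- the lag of `u` exceeds `μ (x - t) < B` only if `Ψ u > 0`, which excludes `u = v₀`
  have hxt : μ * (x - t) < B := by
    have := lt_of_lt_of_le hx.2 (min_le_right _ _)
    rw [← sub_lt_iff_lt_add', lt_div_iff₀ hμ] at this
    linarith
  have hΨu : 0 < Ψ u := by linarith [hrate u t x hx.1]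
  have hu₀ : u ≠ v₀ := by rintro rfl; exact hΨu.ne' hzero
  have hfastu := hfast u hu₀ x ⟨n, GCS.fastCondAt_of_forall_sub_le hδsym hOanti
    (fun w => L w t + Ψ w) (fun w hw => GCS.add_Psi_le_add_Psi_add_edgeWt hnc hpair L t hw)
    (GCS.exists_adj_add_Psi_add_edgeWt_le hnc hpair L t hΨu) (fun w => by linarith [hu w])⟩
  rw [deriv_fun_sub (by fun_prop) (hdiff u x)]
  simp only [deriv_const_add', deriv_const_mul_field', deriv_sub_const, deriv_id'']
  linarith

/-- external synchronization: if `Ψ_{v₀}^{s-1/2}(t) = 0`, then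
`L_v(t') - L_v(t) ≥ (t'-t) + min{Ψ_v^{s-1/2}(t), μ(t'-t) - Ψ^{s-1/2}(t) + Ψ_v^{s-1/2}(t)}`. -/
theorem virtual_catchup
    {V' : Type*} [Fintype V'] [DecidableEq V'] [Nonempty V']
    (v₀ : V') (H : SimpleGraph V') (hconn : H.Connected)
    (δ O : V' → V' → ℝ)
    (hδpos : ∀ v w, H.Adj v w → 0 < δ v w)
    (hδsym : ∀ v w, H.Adj v w → δ v w = δ w v)
    (hOanti : ∀ v w, H.Adj v w → O v w = -O w v)
    (L : V' → ℝ → ℝ) (ϑ μ ζ : ℝ)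
    (hϑ : 1 < ϑ) (hμ : 0 < μ) (hζϑ : ϑ < ζ) (hζμ : ζ < 1 + μ)
    (hdiff : ∀ v, Differentiable ℝ (L v))
    (hv₀ : ∀ t : ℝ, deriv (L v₀) t = ζ)
    (hlo : ∀ v : V', v ≠ v₀ → ∀ t : ℝ, 1 ≤ deriv (L v) t)
    (hhi : ∀ v : V', v ≠ v₀ → ∀ t : ℝ, deriv (L v) t ≤ ϑ * (1 + μ))
    (hslow : ∀ v : V', v ≠ v₀ → ∀ t : ℝ,
      (∃ s : ℕ, GCS.SlowCondAt H δ O L v t s) → deriv (L v) t ≤ ϑ)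
    (hfast : ∀ v : V', v ≠ v₀ → ∀ t : ℝ,
      (∃ s : ℕ, GCS.FastCondAt H δ O L v t s) → 1 + μ ≤ deriv (L v) t)
    (s : ℕ) (hs1 : 1 ≤ s) (hnc : GCS.NonnegCycles H δ O ((s : ℝ) - 1/2))
    (v : V') (t t' : ℝ) (htt' : t < t')
    (hzero : GCS.Psi H δ O ((s : ℝ) - 1/2) L v₀ t = 0) :
    (t' - t) + min (GCS.Psi H δ O ((s : ℝ) - 1/2) L v t)
        (μ * (t' - t) - GCS.PsiAll H δ O ((s : ℝ) - 1/2) L t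
          + GCS.Psi H δ O ((s : ℝ) - 1/2) L v t) ≤
      L v t' - L v t :=
  virtual_catchup_general v₀ H δ O hδpos hδsym hOanti L ϑ μ ζ hϑ hμ hζϑ hdiff hv₀ hlo hfast s hs1
    hnc v t t' htt' hzero
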